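/- Assume Hypothesis 7.1 holds for the subset I ⊆ S. Let u ∈ U^I_min and let l ∈ L_u with l ≠ 0 and with l_j = 0 for all j with 1 ≤ j ≤ μ_I and for all j with j ≥ μ_I + m + 1. Then l_{μ_I+k_u} < 0, and there exist nonnegative rational numbers c_k for k ∈ {1, …, m} ∖ {k_u} with Σ_k c_k = 1 and c_k > 0 exactly when l_{μ_I+k} > 0, such that a^+_{μ_I+k_u} = Σ_k c_k·a^+_{μ_I+k}; in particular a^+_{μ_I+k_u} lies in the convex hull of the set {a^+_{μ_I+k} : l_{μ_I+k} > 0}. -/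
import Mathlib


/-- `a_j⁺ = (a_{0j}, …, a_{nj}, 1) ∈ ℕ^{n+2}`. -/
def aplus {n N : ℕ} (a : Fin N → Fin (n + 1) → ℕ) (j : Fin N) : Fin (n + 2) → ℕ :=
  Fin.snoc (a j) 1

/-- Eq. (7.15) and Lemma 7.16: under Hypothesis 7.1, if `u = umin r`
is in `U^I_min` and `l ∈ L_u` is nonzero with `l_j = 0` for `j ≤ μ_I` and for
`j ≥ μ_I + m + 1`, then `l_{μ_I+k_u} < 0` and there are nonnegative rationals `c_k`
(for `k ≠ k_u`, encoded by `c_{k_u} = 0`) summing to `1`, positive exactly when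
`l_{μ_I+k} > 0`, with `a⁺_{μ_I+k_u} = ∑_k c_k a⁺_{μ_I+k}`; in particular
`a⁺_{μ_I+k_u}` lies in the convex hull of `{a⁺_{μ_I+k} : l_{μ_I+k} > 0}`
(indices are 0-based, so `j ≤ μ_I` becomes `(j : ℕ) < μ`). -/
theorem stmt_12 (p n N d : ℕ) (hp : p.Prime) (hn : 1 ≤ n) (hN : 1 ≤ N) (hd : 2 ≤ d)
    (a : Fin N → Fin (n + 1) → ℕ) (ha : ∀ j, ∑ i, a j i = d)
    (I : Finset (Fin (n + 1)))
    (μ m : ℕ) (hμ : μ + 1 = (I.card + d - 1) / d)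
    (umin : Fin m → Fin (n + 2) → ℕ)
    (huinj : Function.Injective umin)
    (hurange : ∀ u : Fin (n + 2) → ℕ,
      ((∑ i : Fin (n + 1), u i.castSucc = d * u (Fin.last (n + 1))) ∧
        (∀ i ∈ I, 0 < u i.castSucc) ∧ u (Fin.last (n + 1)) = μ + 1)
      ↔ ∃ r : Fin m, umin r = u)
    (hNm : μ + m ≤ N)
    (κ : Fin m → Fin m)
    (hκ : ∀ r : Fin m, ∀ i : Fin (n + 2),
      umin r i = aplus a ⟨μ + (κ r : ℕ), by have := (κ r).isLt; omega⟩ i +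
        ∑ t : Fin μ, aplus a ⟨(t : ℕ), by have := t.isLt; omega⟩ i)
    (r : Fin m)
    (l : Fin N → ℤ)
    (hlrel : ∀ i : Fin (n + 2), ∑ j, l j * (aplus a j i : ℤ) = 0)
    (hlneg1 : ∀ j : Fin N, (j : ℕ) < μ → l j ≤ 0)
    (hlneg2 : ∀ j : Fin N, (j : ℕ) = μ + (κ r : ℕ) → l j ≤ 0)
    (hlpos : ∀ j : Fin N, ¬ (j : ℕ) < μ → (j : ℕ) ≠ μ + (κ r : ℕ) → 0 ≤ l j)
    (hlne : l ≠ 0)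
    (hlzero1 : ∀ j : Fin N, (j : ℕ) < μ → l j = 0)
    (hlzero2 : ∀ j : Fin N, μ + m ≤ (j : ℕ) → l j = 0) :
    (∀ j : Fin N, (j : ℕ) = μ + (κ r : ℕ) → l j < 0) ∧
    ∃ c : Fin m → ℚ, (∀ k, 0 ≤ c k) ∧ c (κ r) = 0 ∧ (∑ k, c k) = 1 ∧
      (∀ k : Fin m, k ≠ κ r →
        (0 < c k ↔ 0 < l ⟨μ + (k : ℕ), by have := k.isLt; omega⟩)) ∧
      (∀ i : Fin (n + 2),
        (aplus a ⟨μ + (κ r : ℕ), by have := (κ r).isLt; omega⟩ i : ℚ)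
          = ∑ k : Fin m, c k *
              (aplus a ⟨μ + (k : ℕ), by have := k.isLt; omega⟩ i : ℚ)) := by

  classical
  have hmN : μ + m ≤ N := hNm
  -- embedding of Fin m into Fin N
  let e : Fin m → Fin N := fun k => ⟨μ + (k : ℕ), by have := k.isLt; omega⟩
  have heval : ∀ k : Fin m, ((e k : Fin N) : ℕ) = μ + (k : ℕ) := fun k => rfl
  -- the relation restricted to the support
  have key : ∀ i : Fin (n + 2), ∑ k : Fin m, l (e k) * (aplus a (e k) i : ℤ) = 0 := by
    intro i
    have h1 : ∑ j : Fin N, l j * (aplus a j i : ℤ)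
        = ∑ j ∈ Finset.image e Finset.univ, l j * (aplus a j i : ℤ) := by
      refine (Finset.sum_subset (Finset.subset_univ _) ?_).symm
      intro j _ hj
      have hcases : (j : ℕ) < μ ∨ μ + m ≤ (j : ℕ) := by
        by_contra hc
        push_neg at hc
        exact hj (Finset.mem_image.mpr ⟨⟨(j : ℕ) - μ, by omega⟩, Finset.mem_univ _,
          Fin.ext (by simp [e]; omega)⟩)
      rcases hcases with h | h
      · rw [hlzero1 j h]; ring
      · rw [hlzero2 j h]; ring
    have h2 := hlrel i
    rw [h1, Finset.sum_image (fun k _ k' _ h => by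
      have : μ + (k : ℕ) = μ + (k' : ℕ) := congrArg Fin.val h
      exact Fin.ext (by omega))] at h2
    exact h2
  -- sum of coefficients is zero
  have hsumL : ∑ k : Fin m, l (e k) = 0 := by
    have := key (Fin.last (n + 1))
    simpa [aplus, Fin.snoc_last] using this
  -- the coefficient at κ r is negative
  have hsneg : l (e (κ r)) < 0 := by
    rcases lt_or_eq_of_le (hlneg2 (e (κ r)) rfl) with h | h
    · exact h
    · exfalso
      have hpos : ∀ k : Fin m, 0 ≤ l (e k) := by
        intro k
        by_cases hk : k = κ r
        · subst hk; exact le_of_eq h.symm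
        · refine hlpos (e k) (by simp [heval]) ?_
          simp only [heval]
          intro hcontra
          exact hk (Fin.ext (by omega))
      have hzero : ∀ k ∈ Finset.univ, l (e k) = 0 :=
        (Finset.sum_eq_zero_iff_of_nonneg (fun k _ => hpos k)).mp hsumL
      apply hlne
      funext j
      by_cases h1 : (j : ℕ) < μ
      · exact hlzero1 j h1
      by_cases h2 : μ + m ≤ (j : ℕ)
      · exact hlzero2 j h2
      · have : j = e ⟨(j : ℕ) - μ, by omega⟩ := Fin.ext (by simp [e]; omega)
        rw [this]
        exact hzero _ (Finset.mem_univ _)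
  constructor
  · intro j hj
    have : j = e (κ r) := Fin.ext hj
    rw [this]; exact hsneg
  -- construct the convex coefficients
  set s : ℚ := ((-(l (e (κ r))) : ℤ) : ℚ) with hs
  have hspos : 0 < s := by
    have h : (0 : ℤ) < -(l (e (κ r))) := by omega
    rw [hs]; exact_mod_cast h
  refine ⟨fun k => if k = κ r then 0 else (l (e k) : ℚ) / s, ?_, ?_, ?_, ?_, ?_⟩
  · intro k
    by_cases hk : k = κ r
    · simp [hk]
    · simp only [hk, if_false]
      apply div_nonneg _ hspos.le
      have : 0 ≤ l (e k) := by
        refine hlpos (e k) (by simp [heval]) ?_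
        simp only [heval]
        intro hcontra
        exact hk (Fin.ext (by omega))
      exact_mod_cast this
  · simp
  · have hEr : ∑ k ∈ Finset.univ.erase (κ r), (l (e k) : ℚ) = s := by
      have h1 := Finset.sum_erase_add Finset.univ (fun k : Fin m => (l (e k) : ℚ))
        (Finset.mem_univ (κ r))
      have h2 : ∑ k : Fin m, (l (e k) : ℚ) = 0 := by
        exact_mod_cast congrArg (fun z : ℤ => (z : ℚ)) hsumL
      have hsQ : s = -(l (e (κ r)) : ℚ) := by rw [hs]; push_cast; ring
      simp only [h2] at h1
      linarith
    have h3 := Finset.sum_erase_add Finset.univ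
      (fun k : Fin m => if k = κ r then (0:ℚ) else (l (e k) : ℚ) / s)
      (Finset.mem_univ (κ r))
    simp only [eq_self_iff_true, if_true, add_zero] at h3
    rw [← h3, Finset.sum_congr rfl (fun k hk => if_neg (Finset.ne_of_mem_erase hk)),
      ← Finset.sum_div, hEr, div_self (ne_of_gt hspos)]
  · intro k hk
    simp only [hk, if_false]
    constructor
    · intro h
      have : 0 < (l (e k) : ℚ) := by
        by_contra hc
        push_neg at hc
        have : (l (e k) : ℚ) / s ≤ 0 := div_nonpos_of_nonpos_of_nonneg hc hspos.le
        linarith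
      exact_mod_cast this
    · intro h
      exact div_pos (by exact_mod_cast h) hspos
  · intro i
    have hkey := key i
    have hQ : ∑ k : Fin m, (l (e k) : ℚ) * (aplus a (e k) i : ℚ) = 0 := by
      exact_mod_cast congrArg (fun z : ℤ => (z : ℚ)) hkey
    have hsplit := Finset.sum_erase_add Finset.univ
      (fun k : Fin m => (l (e k) : ℚ) * (aplus a (e k) i : ℚ)) (Finset.mem_univ (κ r))
    simp only [hQ] at hsplit
    have hsne : s ≠ 0 := ne_of_gt hspos
    have hsQ : s = -(l (e (κ r)) : ℚ) := by rw [hs]; push_cast; ring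
    have hmain : (aplus a (e (κ r)) i : ℚ)
        = ∑ k ∈ Finset.univ.erase (κ r), ((l (e k) : ℚ) / s) * (aplus a (e k) i : ℚ) := by
      have heq : ∑ k ∈ Finset.univ.erase (κ r), ((l (e k) : ℚ) / s) * (aplus a (e k) i : ℚ)
          = (∑ k ∈ Finset.univ.erase (κ r), (l (e k) : ℚ) * (aplus a (e k) i : ℚ)) / s := by
        rw [Finset.sum_div]
        exact Finset.sum_congr rfl (fun k _ => by ring)
      rw [heq]
      have hval : ∑ k ∈ Finset.univ.erase (κ r), (l (e k) : ℚ) * (aplus a (e k) i : ℚ)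
          = s * (aplus a (e (κ r)) i : ℚ) := by
        rw [hsQ]; linarith
      rw [hval, mul_comm, mul_div_assoc, div_self hsne, mul_one]
    have h3 := Finset.sum_erase_add Finset.univ
      (fun k : Fin m => (if k = κ r then (0:ℚ) else (l (e k) : ℚ) / s) * (aplus a (e k) i : ℚ))
      (Finset.mem_univ (κ r))
    simp only [eq_self_iff_true, if_true, zero_mul, add_zero] at h3
    rw [show (∑ k : Fin m, (if k = κ r then (0:ℚ) else (l (e k) : ℚ) / s) *
        (aplus a ⟨μ + (k : ℕ), by have := k.isLt; omega⟩ i : ℚ))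
      = ∑ k : Fin m, (if k = κ r then (0:ℚ) else (l (e k) : ℚ) / s) * (aplus a (e k) i : ℚ)
      from rfl, ← h3,
      Finset.sum_congr rfl (fun k hk => by rw [if_neg (Finset.ne_of_mem_erase hk)])]
    exact hmain
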